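/- Suppose that L(r) > 0 for all r > 0, that L has lower Matuszewska index at zero strictly bigger than −p (i.e., there exist a > −p and A, R₀ > 0 with L(r₂) ≥ A (r₂/r₁)^a L(r₁) whenever 0 < r₁ < r₂ < R₀), and that L has lower Matuszewska index at infinity strictly bigger than −p (i.e., there exist a' > −p and A', R₀' > 0 with L(r₂) ≥ A' (r₂/r₁)^{a'} L(r₁) whenever R₀' < r₁ < r₂). Then there exist constants c₁, c₂ > 0 such that c₁ L(r) ≤ h_p(r) ≤ c₂ L(r) for all r > 0. -/

import Mathlib

/-!
The lower bound `L ≤ h_p` is immediate, and `h_p(r) ≤ L(r) + r^{-p} ∫_{|x| ≤ r} |x|^p dν`. Cut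
`{ρ < |x| ≤ r}` into the dyadic shells `{r/2^{k+1} < |x| ≤ r/2^k}`: the `k`-th shell contributes at
most `2^{-kp} L(r/2^{k+1})`, which a lower Matuszewska bound with index `a > -p` turns into
`O(2^{-k(p+a)}) L(r)`, a geometric series. Near zero the shells exhaust `{0 < |x| ≤ r}`; near
infinity the remaining ball `{|x| ≤ ρ}` contributes `(ρ/r)^p h_p(ρ) ≤ (r/ρ)^{a'} h_p(ρ) = O(L(r))`.
On the compact range of radii in between, `h_p` is bounded above and `L` below by a positive
constant.
-/

open MeasureTheory ENNReal Set Filter Topology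

/-- The concentration function `h_p(r) = ∫ min(1, |x|^p/r^p) ν(dx)`. -/
noncomputable def hpFun (d : ℕ) (p : ℝ) (ν : Measure (EuclideanSpace ℝ (Fin d))) (r : ℝ) :
    ℝ≥0∞ :=
  ∫⁻ x, ENNReal.ofReal (min 1 (‖x‖ ^ p / r ^ p)) ∂ν

/-- The tail function `L(r) = ν({x : |x| > r})`. -/
noncomputable def LFun (d : ℕ) (ν : Measure (EuclideanSpace ℝ (Fin d))) (r : ℝ) : ℝ≥0∞ :=
  ν {x | r < ‖x‖}

lemma min_one_div_le_max_mul_min_one {y c : ℝ} (hy : 0 ≤ y) :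
    min 1 (y / c) ≤ max 1 c⁻¹ * min 1 y := by
  rcases le_total y 1 with hy1 | hy1
  · rw [min_eq_right hy1]
    calc min 1 (y / c) ≤ c⁻¹ * y := (min_le_right _ _).trans_eq (div_eq_inv_mul _ _)
      _ ≤ max 1 c⁻¹ * y := by gcongr; exact le_max_right _ _
  · rw [min_eq_left hy1, mul_one]
    exact (min_le_left _ _).trans (le_max_left _ _)

lemma rpow_neg_mul_inv_mul_rpow_two_pow_succ (p α B : ℝ) (k : ℕ) :
    ((2:ℝ) ^ k) ^ (-p) * (B * ((2:ℝ) ^ (k + 1)) ^ α)⁻¹ =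
      B⁻¹ * 2 ^ (-α) * ((2:ℝ) ^ (-(p + α))) ^ k := by
  have hu : (0:ℝ) < 2 ^ k := by positivity
  rw [Real.rpow_pow_comm zero_le_two, pow_succ, Real.mul_rpow hu.le zero_le_two,
    neg_add, Real.rpow_add hu, Real.rpow_neg hu.le α, Real.rpow_neg zero_le_two]
  field_simp

lemma ENNReal.eq_ofReal_toReal_div_mul {x y : ℝ≥0∞} (hx : x ≠ ⊤) (hy0 : y ≠ 0) (hy : y ≠ ⊤) :
    x = ENNReal.ofReal (x / y).toReal * y := by
  rw [ENNReal.ofReal_toReal (ENNReal.div_ne_top hx hy0), ENNReal.div_mul_cancel hy0 hy]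

lemma ENNReal.tsum_le_ofReal_div_mul_of_le_geometric {c θ : ℝ} (hc : 0 ≤ c) (hθ0 : 0 ≤ θ)
    (hθ1 : θ < 1) {X : ℝ≥0∞} {g : ℕ → ℝ≥0∞} (hg : ∀ k, g k ≤ ENNReal.ofReal (c * θ ^ k) * X) :
    ∑' k, g k ≤ ENNReal.ofReal (c / (1 - θ)) * X := by
  have hsum : HasSum (fun k : ℕ => c * θ ^ k) (c / (1 - θ)) := by
    simpa only [div_eq_mul_inv] using (hasSum_geometric_of_lt_one hθ0 hθ1).mul_left c
  calc ∑' k, g k ≤ ∑' k, ENNReal.ofReal (c * θ ^ k) * X := ENNReal.tsum_le_tsum hg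
    _ = (∑' k, ENNReal.ofReal (c * θ ^ k)) * X := ENNReal.tsum_mul_right
    _ = ENNReal.ofReal (c / (1 - θ)) * X := by
      rw [← ENNReal.ofReal_tsum_of_nonneg (fun k => by positivity) hsum.summable, hsum.tsum_eq]

section NormedGroup

variable {E : Type*} [NormedAddCommGroup E] [MeasurableSpace E]

lemma setLIntegral_norm_le_le_add (μ : Measure E) (f : E → ℝ≥0∞) (ρ r : ℝ) :
    ∫⁻ x in {x | ‖x‖ ≤ r}, f x ∂μ ≤
      ∫⁻ x in {x | ‖x‖ ≤ ρ}, f x ∂μ + ∫⁻ x in {x | ρ < ‖x‖ ∧ ‖x‖ ≤ r}, f x ∂μ := by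
  refine (lintegral_mono_set fun x (hx : ‖x‖ ≤ r) => ?_).trans (lintegral_union_le f _ _)
  rcases le_or_gt ‖x‖ ρ with h | h
  · exact Or.inl h
  · exact Or.inr ⟨h, hx⟩

lemma setLIntegral_annulus_le_tsum_shell (μ : Measure E) {p ρ r : ℝ} (hp : 0 ≤ p) (hρ : 0 ≤ ρ)
    (hr : 0 < r) :
    ∫⁻ x in {x | ρ < ‖x‖ ∧ ‖x‖ ≤ r}, ENNReal.ofReal (‖x‖ ^ p / r ^ p) ∂μ ≤
      ∑' k : ℕ, ENNReal.ofReal (((2:ℝ) ^ k) ^ (-p)) *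
        μ {x | ρ < ‖x‖ ∧ r / 2 ^ (k + 1) < ‖x‖ ∧ ‖x‖ ≤ r / 2 ^ k} := by
  have hcover : {x : E | ρ < ‖x‖ ∧ ‖x‖ ≤ r} ⊆
      ⋃ k : ℕ, {x | ρ < ‖x‖ ∧ r / 2 ^ (k + 1) < ‖x‖ ∧ ‖x‖ ≤ r / 2 ^ k} := by
    rintro x ⟨hρx, hxr⟩
    have hx : 0 < ‖x‖ := hρ.trans_lt hρx
    obtain ⟨k, hk, hk'⟩ := exists_nat_pow_near ((one_le_div hx).2 hxr) one_lt_two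
    refine mem_iUnion.2 ⟨k, hρx, ?_, ?_⟩
    · rw [div_lt_iff₀ (by positivity)]
      rwa [div_lt_iff₀ hx, mul_comm] at hk'
    · rw [le_div_iff₀ (by positivity)]
      rwa [le_div_iff₀ hx, mul_comm] at hk
  calc _ ≤ ∫⁻ x in ⋃ k : ℕ, {x | ρ < ‖x‖ ∧ r / 2 ^ (k + 1) < ‖x‖ ∧ ‖x‖ ≤ r / 2 ^ k},
          ENNReal.ofReal (‖x‖ ^ p / r ^ p) ∂μ := lintegral_mono_set hcover
    _ ≤ ∑' k : ℕ, ∫⁻ x in {x | ρ < ‖x‖ ∧ r / 2 ^ (k + 1) < ‖x‖ ∧ ‖x‖ ≤ r / 2 ^ k},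
          ENNReal.ofReal (‖x‖ ^ p / r ^ p) ∂μ := lintegral_iUnion_le _ _
    _ ≤ _ := by
      refine ENNReal.tsum_le_tsum fun k => ?_
      rw [← setLIntegral_const]
      refine setLIntegral_mono measurable_const fun x hx => ENNReal.ofReal_le_ofReal ?_
      have hxk : ‖x‖ / r ≤ ((2:ℝ) ^ k)⁻¹ := by
        rw [div_le_iff₀ hr, ← div_eq_inv_mul]
        exact hx.2.2
      calc ‖x‖ ^ p / r ^ p = (‖x‖ / r) ^ p := (Real.div_rpow (norm_nonneg x) hr.le p).symm
        _ ≤ (((2:ℝ) ^ k)⁻¹) ^ p := Real.rpow_le_rpow (by positivity) hxk hp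
        _ = ((2:ℝ) ^ k) ^ (-p) := by
          rw [Real.inv_rpow (by positivity), Real.rpow_neg (by positivity)]

lemma setLIntegral_annulus_le_mul_tail (μ : Measure E) {p α B ρ r : ℝ} (hp : 0 ≤ p)
    (hpα : 0 < p + α) (hB : 0 < B) (hρ : 0 ≤ ρ) (hr : 0 < r)
    (hT : ∀ t, ρ < 2 * t → t < r →
      ENNReal.ofReal (B * (r / t) ^ α) * μ {x | t < ‖x‖} ≤ μ {x | r < ‖x‖}) :
    ∫⁻ x in {x | ρ < ‖x‖ ∧ ‖x‖ ≤ r}, ENNReal.ofReal (‖x‖ ^ p / r ^ p) ∂μ ≤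
      ENNReal.ofReal (B⁻¹ * 2 ^ (-α) / (1 - 2 ^ (-(p + α)))) * μ {x | r < ‖x‖} := by
  refine (setLIntegral_annulus_le_tsum_shell μ hp hρ hr).trans
    (ENNReal.tsum_le_ofReal_div_mul_of_le_geometric (by positivity) (by positivity)
      (Real.rpow_lt_one_of_one_lt_of_neg one_lt_two (by linarith)) fun k => ?_)
  rcases le_or_gt (r / 2 ^ k) ρ with hk | hk
  · have hempty : {x : E | ρ < ‖x‖ ∧ r / 2 ^ (k + 1) < ‖x‖ ∧ ‖x‖ ≤ r / 2 ^ k} = ∅ :=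
      eq_empty_of_forall_notMem fun x hx => by linarith [hx.1, hx.2.2]
    simp [hempty]
  set t : ℝ := r / 2 ^ (k + 1)
  have hρt : ρ < 2 * t := by
    rwa [show 2 * t = r / 2 ^ k by simp only [t, pow_succ]; field_simp]
  have htr : t < r := div_lt_self hr (one_lt_pow₀ (one_lt_two : (1:ℝ) < 2) k.succ_ne_zero)
  have hrt : r / t = 2 ^ (k + 1) := div_div_cancel₀ hr.ne'
  have hBt : 0 < B * (r / t) ^ α := by positivity
  have hshell : μ {x | ρ < ‖x‖ ∧ t < ‖x‖ ∧ ‖x‖ ≤ r / 2 ^ k} ≤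
      (ENNReal.ofReal (B * (r / t) ^ α))⁻¹ * μ {x | r < ‖x‖} :=
    (measure_mono fun x hx => hx.2.1).trans <|
      (ENNReal.mul_le_iff_le_inv (ENNReal.ofReal_pos.2 hBt).ne' ENNReal.ofReal_ne_top).1
        (hT t hρt htr)
  calc ENNReal.ofReal (((2:ℝ) ^ k) ^ (-p)) * μ {x | ρ < ‖x‖ ∧ t < ‖x‖ ∧ ‖x‖ ≤ r / 2 ^ k}
      ≤ ENNReal.ofReal (((2:ℝ) ^ k) ^ (-p)) *
          ((ENNReal.ofReal (B * (r / t) ^ α))⁻¹ * μ {x | r < ‖x‖}) := by gcongr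
    _ = ENNReal.ofReal (((2:ℝ) ^ k) ^ (-p) * (B * (r / t) ^ α)⁻¹) * μ {x | r < ‖x‖} := by
      rw [← mul_assoc, ← ENNReal.ofReal_inv_of_pos hBt, ← ENNReal.ofReal_mul (by positivity)]
    _ = _ := by rw [hrt, rpow_neg_mul_inv_mul_rpow_two_pow_succ]

end NormedGroup

section Concentration

variable {d : ℕ} {p : ℝ} {ν : Measure (EuclideanSpace ℝ (Fin d))}

lemma LFun_antitone : Antitone (LFun d ν) :=
  fun _ _ hst => measure_mono fun _ hx => hst.trans_lt hx

lemma hpFun_antitoneOn (hp : 0 ≤ p) : AntitoneOn (hpFun d p ν) (Ioi 0) := by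
  intro s (hs : 0 < s) t _ hst
  refine lintegral_mono fun x => ENNReal.ofReal_le_ofReal (min_le_min le_rfl ?_)
  exact div_le_div_of_nonneg_left (by positivity) (Real.rpow_pos_of_pos hs p)
    (Real.rpow_le_rpow hs.le hst hp)

lemma LFun_le_hpFun (hp : 0 ≤ p) {r : ℝ} (hr : 0 < r) : LFun d ν r ≤ hpFun d p ν r :=
  calc LFun d ν r = ∫⁻ _ in {x | r < ‖x‖}, 1 ∂ν := (setLIntegral_one _).symm
    _ ≤ ∫⁻ x in {x | r < ‖x‖}, ENNReal.ofReal (min 1 (‖x‖ ^ p / r ^ p)) ∂ν := by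
      refine setLIntegral_mono' (measurableSet_lt measurable_const measurable_norm)
        fun x (hx : r < ‖x‖) => ?_
      have hle : 1 ≤ ‖x‖ ^ p / r ^ p :=
        (one_le_div (by positivity)).2 (Real.rpow_le_rpow hr.le hx.le hp)
      rw [min_eq_left hle, ENNReal.ofReal_one]
    _ ≤ hpFun d p ν r := setLIntegral_le_lintegral _ _

lemma hpFun_lt_top (hint : ∫⁻ x, ENNReal.ofReal (min 1 (‖x‖ ^ p)) ∂ν < ⊤) (s : ℝ) :
    hpFun d p ν s < ⊤ :=
  calc hpFun d p ν s
      ≤ ∫⁻ x, ENNReal.ofReal (max 1 (s ^ p)⁻¹) * ENNReal.ofReal (min 1 (‖x‖ ^ p)) ∂ν := by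
        refine lintegral_mono fun x => ?_
        rw [← ENNReal.ofReal_mul (zero_le_one.trans (le_max_left _ _))]
        exact ENNReal.ofReal_le_ofReal (min_one_div_le_max_mul_min_one (by positivity))
    _ = ENNReal.ofReal (max 1 (s ^ p)⁻¹) * ∫⁻ x, ENNReal.ofReal (min 1 (‖x‖ ^ p)) ∂ν :=
      lintegral_const_mul' _ _ ENNReal.ofReal_ne_top
    _ < ⊤ := ENNReal.mul_lt_top ENNReal.ofReal_lt_top hint

lemma hpFun_le_LFun_add_setLIntegral (r : ℝ) :
    hpFun d p ν r ≤
      LFun d ν r + ∫⁻ x in {x | ‖x‖ ≤ r}, ENNReal.ofReal (‖x‖ ^ p / r ^ p) ∂ν := by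
  have hS : MeasurableSet {x : EuclideanSpace ℝ (Fin d) | r < ‖x‖} :=
    measurableSet_lt measurable_const measurable_norm
  rw [hpFun, ← lintegral_add_compl _ hS]
  gcongr with x
  · calc ∫⁻ x in {x | r < ‖x‖}, ENNReal.ofReal (min 1 (‖x‖ ^ p / r ^ p)) ∂ν
        ≤ ∫⁻ _ in {x | r < ‖x‖}, 1 ∂ν :=
          lintegral_mono fun x => ENNReal.ofReal_le_one.2 (min_le_left _ _)
      _ = LFun d ν r := setLIntegral_one _
  · simp only [compl_ofPred, not_lt, le_refl]
  · exact min_le_right _ _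

lemma hpFun_le_of_setLIntegral_le {r C : ℝ} (hC : 0 ≤ C)
    (h : ∫⁻ x in {x | ‖x‖ ≤ r}, ENNReal.ofReal (‖x‖ ^ p / r ^ p) ∂ν ≤
      ENNReal.ofReal C * LFun d ν r) :
    hpFun d p ν r ≤ ENNReal.ofReal (1 + C) * LFun d ν r :=
  calc hpFun d p ν r ≤ LFun d ν r + ENNReal.ofReal C * LFun d ν r :=
        (hpFun_le_LFun_add_setLIntegral r).trans (add_le_add le_rfl h)
    _ = ENNReal.ofReal (1 + C) * LFun d ν r := by
      rw [ENNReal.ofReal_add zero_le_one hC, ENNReal.ofReal_one, add_mul, one_mul]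

lemma setLIntegral_norm_le_le_rpow_mul_hpFun (hp : 0 ≤ p) {ρ r : ℝ} (hρ : 0 < ρ) (hr : 0 < r) :
    ∫⁻ x in {x | ‖x‖ ≤ ρ}, ENNReal.ofReal (‖x‖ ^ p / r ^ p) ∂ν ≤
      ENNReal.ofReal ((ρ / r) ^ p) * hpFun d p ν ρ :=
  calc ∫⁻ x in {x | ‖x‖ ≤ ρ}, ENNReal.ofReal (‖x‖ ^ p / r ^ p) ∂ν
      ≤ ∫⁻ x in {x | ‖x‖ ≤ ρ},
          ENNReal.ofReal ((ρ / r) ^ p) * ENNReal.ofReal (min 1 (‖x‖ ^ p / ρ ^ p)) ∂ν := by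
        refine setLIntegral_mono' (measurableSet_le measurable_norm measurable_const)
          fun x (hx : ‖x‖ ≤ ρ) => ?_
        have hle : ‖x‖ ^ p / ρ ^ p ≤ 1 :=
          div_le_one_of_le₀ (Real.rpow_le_rpow (norm_nonneg x) hx hp) (by positivity)
        rw [min_eq_right hle, ← ENNReal.ofReal_mul (by positivity),
          Real.div_rpow hρ.le hr.le]
        refine ENNReal.ofReal_le_ofReal (le_of_eq ?_)
        field_simp
    _ ≤ ∫⁻ x, ENNReal.ofReal ((ρ / r) ^ p) * ENNReal.ofReal (min 1 (‖x‖ ^ p / ρ ^ p)) ∂ν :=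
      setLIntegral_le_lintegral _ _
    _ = ENNReal.ofReal ((ρ / r) ^ p) * hpFun d p ν ρ :=
      lintegral_const_mul' _ _ ENNReal.ofReal_ne_top

lemma exists_hpFun_le_of_lowerIndex_atZero (hp : 0 < p) {a A R₀ : ℝ} (ha : -p < a) (hA : 0 < A)
    (hMat : ∀ r₁ r₂ : ℝ, 0 < r₁ → r₁ < r₂ → r₂ < R₀ →
      ENNReal.ofReal (A * (r₂ / r₁) ^ a) * LFun d ν r₁ ≤ LFun d ν r₂) :
    ∃ C : ℝ, ∀ r, 0 < r → r < R₀ → hpFun d p ν r ≤ ENNReal.ofReal C * LFun d ν r := by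
  refine ⟨1 + A⁻¹ * 2 ^ (-a) / (1 - 2 ^ (-(p + a))), fun r hr hrR₀ => ?_⟩
  have hθ : (2:ℝ) ^ (-(p + a)) < 1 := Real.rpow_lt_one_of_one_lt_of_neg one_lt_two (by linarith)
  refine hpFun_le_of_setLIntegral_le (div_nonneg (by positivity) (by linarith)) ?_
  have hcenter : ∫⁻ x in {x | ‖x‖ ≤ (0:ℝ)}, ENNReal.ofReal (‖x‖ ^ p / r ^ p) ∂ν = 0 := by
    rw [show {x : EuclideanSpace ℝ (Fin d) | ‖x‖ ≤ 0} = {0} by ext; simp, lintegral_singleton]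
    simp [Real.zero_rpow hp.ne']
  calc ∫⁻ x in {x | ‖x‖ ≤ r}, ENNReal.ofReal (‖x‖ ^ p / r ^ p) ∂ν
      ≤ ∫⁻ x in {x | ‖x‖ ≤ (0:ℝ)}, ENNReal.ofReal (‖x‖ ^ p / r ^ p) ∂ν +
          ∫⁻ x in {x | 0 < ‖x‖ ∧ ‖x‖ ≤ r}, ENNReal.ofReal (‖x‖ ^ p / r ^ p) ∂ν :=
        setLIntegral_norm_le_le_add ν _ 0 r
    _ = ∫⁻ x in {x | 0 < ‖x‖ ∧ ‖x‖ ≤ r}, ENNReal.ofReal (‖x‖ ^ p / r ^ p) ∂ν := by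
        rw [hcenter, zero_add]
    _ ≤ _ := setLIntegral_annulus_le_mul_tail ν hp.le (by linarith) hA le_rfl hr
        fun t ht htr => hMat t r (by linarith) htr hrR₀

lemma exists_hpFun_le_on_Icc (hp : 0 ≤ p)
    (hint : ∫⁻ x, ENNReal.ofReal (min 1 (‖x‖ ^ p)) ∂ν < ⊤) {s u : ℝ} (hs : 0 < s)
    (hu : 0 < LFun d ν u) :
    ∃ C : ℝ, ∀ r, s ≤ r → r ≤ u → hpFun d p ν r ≤ ENNReal.ofReal C * LFun d ν r := by
  refine ⟨(hpFun d p ν s / LFun d ν u).toReal, fun r hsr hru => ?_⟩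
  have hLu : LFun d ν u ≠ ⊤ :=
    (((LFun_antitone (hsr.trans hru)).trans (LFun_le_hpFun hp hs)).trans_lt
      (hpFun_lt_top hint s)).ne
  calc hpFun d p ν r ≤ hpFun d p ν s := hpFun_antitoneOn hp hs (hs.trans_le hsr) hsr
    _ = ENNReal.ofReal (hpFun d p ν s / LFun d ν u).toReal * LFun d ν u :=
      ENNReal.eq_ofReal_toReal_div_mul (hpFun_lt_top hint s).ne hu.ne' hLu
    _ ≤ _ := by gcongr; exact LFun_antitone hru

lemma exists_hpFun_le_of_lowerIndex_atTop (hp : 0 < p)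
    (hint : ∫⁻ x, ENNReal.ofReal (min 1 (‖x‖ ^ p)) ∂ν < ⊤) {a' A' R₀' : ℝ} (ha' : -p < a')
    (hA' : 0 < A') (hR₀' : 0 < R₀') (hLpos : 0 < LFun d ν (2 * R₀'))
    (hMat' : ∀ r₁ r₂ : ℝ, R₀' < r₁ → r₁ < r₂ →
      ENNReal.ofReal (A' * (r₂ / r₁) ^ a') * LFun d ν r₁ ≤ LFun d ν r₂) :
    ∃ C : ℝ, ∀ r, 2 * R₀' < r → hpFun d p ν r ≤ ENNReal.ofReal C * LFun d ν r := by
  set ρ := 2 * R₀'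
  have hρ : 0 < ρ := by positivity
  set c₀ := (hpFun d p ν ρ / (ENNReal.ofReal A' * LFun d ν ρ)).toReal
  have hhρ : hpFun d p ν ρ = ENNReal.ofReal c₀ * (ENNReal.ofReal A' * LFun d ν ρ) :=
    ENNReal.eq_ofReal_toReal_div_mul (hpFun_lt_top hint ρ).ne
      (mul_ne_zero (ENNReal.ofReal_pos.2 hA').ne' hLpos.ne')
      (ENNReal.mul_ne_top ENNReal.ofReal_ne_top
        ((LFun_le_hpFun hp.le hρ).trans_lt (hpFun_lt_top hint ρ)).ne)
  set K := A'⁻¹ * 2 ^ (-a') / (1 - 2 ^ (-(p + a')))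
  have hK : 0 ≤ K := div_nonneg (by positivity)
    (sub_nonneg.2 (Real.rpow_le_one_of_one_le_of_nonpos one_le_two (by linarith)))
  refine ⟨1 + (c₀ + K), fun r hρr => hpFun_le_of_setLIntegral_le (by positivity) ?_⟩
  have hr : 0 < r := hρ.trans hρr
  have hball : ∫⁻ x in {x | ‖x‖ ≤ ρ}, ENNReal.ofReal (‖x‖ ^ p / r ^ p) ∂ν ≤
      ENNReal.ofReal c₀ * LFun d ν r :=
    calc ∫⁻ x in {x | ‖x‖ ≤ ρ}, ENNReal.ofReal (‖x‖ ^ p / r ^ p) ∂ν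
        ≤ ENNReal.ofReal ((ρ / r) ^ p) * hpFun d p ν ρ :=
          setLIntegral_norm_le_le_rpow_mul_hpFun hp.le hρ hr
      _ ≤ ENNReal.ofReal ((r / ρ) ^ a') * hpFun d p ν ρ := by
          gcongr
          rw [← inv_div, Real.inv_rpow (by positivity), ← Real.rpow_neg (by positivity)]
          exact Real.rpow_le_rpow_of_exponent_le ((one_le_div hρ).2 hρr.le) ha'.le
      _ = ENNReal.ofReal c₀ * (ENNReal.ofReal (A' * (r / ρ) ^ a') * LFun d ν ρ) := by
          rw [hhρ, ENNReal.ofReal_mul hA'.le]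
          ring
      _ ≤ ENNReal.ofReal c₀ * LFun d ν r := by
          gcongr
          exact hMat' ρ r (by linarith) hρr
  calc ∫⁻ x in {x | ‖x‖ ≤ r}, ENNReal.ofReal (‖x‖ ^ p / r ^ p) ∂ν
      ≤ ENNReal.ofReal c₀ * LFun d ν r + ENNReal.ofReal K * LFun d ν r :=
        (setLIntegral_norm_le_le_add ν _ ρ r).trans <| add_le_add hball <|
          setLIntegral_annulus_le_mul_tail ν hp.le (by linarith) hA' hρ.le hr
            fun t ht htr => hMat' t r (by linarith) htr
    _ = ENNReal.ofReal (c₀ + K) * LFun d ν r := by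
      rw [ENNReal.ofReal_add ENNReal.toReal_nonneg hK, add_mul]

end Concentration

theorem statement_1_general (d : ℕ) (p : ℝ) (hp1 : 1 ≤ p)
    (ν : Measure (EuclideanSpace ℝ (Fin d)))
    (hint : ∫⁻ x, ENNReal.ofReal (min 1 (‖x‖ ^ p)) ∂ν < ⊤)
    (hLpos : ∀ r : ℝ, 0 < r → 0 < LFun d ν r)
    (a A R₀ : ℝ) (ha : -p < a) (hA : 0 < A) (hR₀ : 0 < R₀)
    (hMat : ∀ r₁ r₂ : ℝ, 0 < r₁ → r₁ < r₂ → r₂ < R₀ →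
      ENNReal.ofReal (A * (r₂ / r₁) ^ a) * LFun d ν r₁ ≤ LFun d ν r₂)
    (a' A' R₀' : ℝ) (ha' : -p < a') (hA' : 0 < A') (hR₀' : 0 < R₀')
    (hMat' : ∀ r₁ r₂ : ℝ, R₀' < r₁ → r₁ < r₂ →
      ENNReal.ofReal (A' * (r₂ / r₁) ^ a') * LFun d ν r₁ ≤ LFun d ν r₂) :
    ∃ c₁ > (0 : ℝ), ∃ c₂ > (0 : ℝ), ∀ r : ℝ, 0 < r →
      ENNReal.ofReal c₁ * LFun d ν r ≤ hpFun d p ν r ∧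
      hpFun d p ν r ≤ ENNReal.ofReal c₂ * LFun d ν r := by
  have hp : 0 < p := by linarith
  have hLρ := hLpos (2 * R₀') (by positivity)
  obtain ⟨C₀, hC₀⟩ := exists_hpFun_le_of_lowerIndex_atZero hp ha hA hMat
  obtain ⟨C₁, hC₁⟩ := exists_hpFun_le_on_Icc hp.le hint hR₀ hLρ
  obtain ⟨C₂, hC₂⟩ := exists_hpFun_le_of_lowerIndex_atTop hp hint ha' hA' hR₀' hLρ hMat'
  refine ⟨1, one_pos, max 1 (max C₀ (max C₁ C₂)), by positivity, fun r hr => ⟨?_, ?_⟩⟩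
  · simpa using LFun_le_hpFun hp.le hr
  have hC : ∃ C ≤ max 1 (max C₀ (max C₁ C₂)),
      hpFun d p ν r ≤ ENNReal.ofReal C * LFun d ν r := by
    rcases lt_or_ge r R₀ with h₀ | h₀
    · exact ⟨C₀, by simp, hC₀ r hr h₀⟩
    rcases le_or_gt r (2 * R₀') with h₁ | h₁
    · exact ⟨C₁, by simp, hC₁ r h₀ h₁⟩
    · exact ⟨C₂, by simp, hC₂ r h₁⟩
  obtain ⟨C, hCle, hCr⟩ := hC
  exact hCr.trans (by gcongr)

/-- If `L > 0` and `L` has lower Matuszewska indices at zero and at infinity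
strictly bigger than `-p`, then `h_p(r) ≈ L(r)` for all `r > 0`. -/
theorem statement_1 (d : ℕ) (hd : 1 ≤ d) (p : ℝ) (hp1 : 1 ≤ p)
    (ν : Measure (EuclideanSpace ℝ (Fin d)))
    (hint : ∫⁻ x, ENNReal.ofReal (min 1 (‖x‖ ^ p)) ∂ν < ⊤)
    (hLpos : ∀ r : ℝ, 0 < r → 0 < LFun d ν r)
    (a A R₀ : ℝ) (ha : -p < a) (hA : 0 < A) (hR₀ : 0 < R₀)
    (hMat : ∀ r₁ r₂ : ℝ, 0 < r₁ → r₁ < r₂ → r₂ < R₀ →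
      ENNReal.ofReal (A * (r₂ / r₁) ^ a) * LFun d ν r₁ ≤ LFun d ν r₂)
    (a' A' R₀' : ℝ) (ha' : -p < a') (hA' : 0 < A') (hR₀' : 0 < R₀')
    (hMat' : ∀ r₁ r₂ : ℝ, R₀' < r₁ → r₁ < r₂ →
      ENNReal.ofReal (A' * (r₂ / r₁) ^ a') * LFun d ν r₁ ≤ LFun d ν r₂) :
    ∃ c₁ > (0 : ℝ), ∃ c₂ > (0 : ℝ), ∀ r : ℝ, 0 < r →
      ENNReal.ofReal c₁ * LFun d ν r ≤ hpFun d p ν r ∧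
      hpFun d p ν r ≤ ENNReal.ofReal c₂ * LFun d ν r :=
  statement_1_general d p hp1 ν hint hLpos a A R₀ ha hA hR₀ hMat a' A' R₀' ha' hA' hR₀' hMat'
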